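/- Frame norm bounds for the generator: if g ∈ L²(ℝ) and α, β > 0 are such that {E_{mβ}T_{nα} g}_{m,n∈ℤ} is a frame for L²(ℝ) with frame bounds A, B (i.e., A∥f∥² ≤ Σ_{m,n} |⟨f, E_{mβ}T_{nα}g⟩|² ≤ B∥f∥² for all f), then A·αβ ≤ ∥g∥²₂ ≤ B·αβ. -/

import Mathlib

/-!
Test the frame inequality against the indicator `f` of an interval `J` of length `δ ≤ 1/β`.
For fixed `n`, the numbers `⟨f, E_{mβ} T_{nα} g⟩` are (up to the factor `β`) the Fourier
coefficients of `conj g(· - nα)` on a period `1/β` containing `J`, so Parseval gives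
`Σ_{m,n} |⟨f, E_{mβ} T_{nα} g⟩|² = β⁻¹ ∫_J G` with `G t = Σ_n |g(t - nα)|²` the `α`-periodization
of `|g|²`. Since `‖f‖² = δ`, this yields `Aβδ ≤ ∫_J G ≤ Bβδ`. Cutting the period `(0, α]` into `N`
such intervals and using `∫_0^α G = ‖g‖²` gives `Aαβ ≤ ‖g‖² ≤ Bαβ`.
-/

open MeasureTheory Complex

/-- Modulation operator `(E_β f)(t) = exp(2πiβt) f(t)`. -/
noncomputable def Emod (β : ℝ) (f : ℝ → ℂ) : ℝ → ℂ :=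
  fun t => Complex.exp (2 * Real.pi * Complex.I * β * t) * f t

/-- Translation operator `(T_α f)(t) = f(t - α)`. -/
noncomputable def Ttrans (α : ℝ) (f : ℝ → ℂ) : ℝ → ℂ := fun t => f (t - α)

/-- Time-frequency shift `π(x, ω) = E_ω T_x`. -/
noncomputable def timeFreq (χ : ℝ × ℝ) (f : ℝ → ℂ) : ℝ → ℂ :=
  Emod χ.2 (Ttrans χ.1 f)

/-- The cocycle `c(χ₁, χ₂) = exp(-2πi ω₂ x₁)`. -/
noncomputable def cocy (χ₁ χ₂ : ℝ × ℝ) : ℂ :=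
  Complex.exp (-(2 * Real.pi * Complex.I * χ₂.2 * χ₁.1))

/-- The `L²` inner product, linear in the first entry: `⟨f, g⟩ = ∫ f(t) conj(g(t)) dt`. -/
noncomputable def inn (f g : ℝ → ℂ) : ℂ := ∫ t : ℝ, f t * (starRingEnd ℂ) (g t)

open Set
open scoped Real ENNReal ComplexConjugate

lemma ofReal_norm_sq_eq_enorm_sq {E : Type*} [NormedAddCommGroup E] (z : E) :
    ENNReal.ofReal (‖z‖ ^ 2) = ‖z‖ₑ ^ 2 := by
  rw [ENNReal.ofReal_pow (norm_nonneg z), ofReal_norm]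

/-- Also valid for a divergent series, where both sides are `0`. -/
lemma tsum_norm_sq_eq_toReal_tsum_enorm_sq {ι E : Type*} [NormedAddCommGroup E] (x : ι → E) :
    ∑' i, ‖x i‖ ^ 2 = (∑' i, ‖x i‖ₑ ^ 2).toReal := by
  rw [ENNReal.tsum_toReal_eq fun _ => by finiteness]
  simp [ENNReal.toReal_pow]

lemma ofReal_integral_norm_sq_eq_lintegral {X E : Type*} [MeasurableSpace X]
    [NormedAddCommGroup E] {μ : Measure X} {h : X → E} (hh : MemLp h 2 μ) :
    ENNReal.ofReal (∫ x, ‖h x‖ ^ 2 ∂μ) = ∫⁻ x, ‖h x‖ₑ ^ 2 ∂μ := by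
  rw [ofReal_integral_eq_lintegral_ofReal (hh.integrable_norm_pow two_ne_zero)
    (.of_forall fun _ => by positivity)]
  simp_rw [ofReal_norm_sq_eq_enorm_sq]

theorem MeasureTheory.Lp.ofReal_norm_sq_eq_lintegral {X E : Type*} [MeasurableSpace X]
    [NormedAddCommGroup E] {μ : Measure X} (f : Lp E 2 μ) :
    ENNReal.ofReal (‖f‖ ^ 2) = ∫⁻ x, ‖f x‖ₑ ^ 2 ∂μ := by
  have h := eLpNorm_nnreal_pow_eq_lintegral (μ := μ) (f := f) (p := 2) two_ne_zero
  simp only [NNReal.coe_ofNat, ENNReal.coe_ofNat, ENNReal.rpow_ofNat] at h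
  rw [ENNReal.ofReal_pow (norm_nonneg f), ofReal_norm, Lp.enorm_def, h]

lemma measure_Ioc_eq_sum_range (μ : Measure ℝ) {δ : ℝ} (hδ : 0 ≤ δ) (a : ℝ) (k : ℕ) :
    μ (Ioc a (a + k * δ)) = ∑ i ∈ Finset.range k, μ (Ioc (a + i * δ) (a + i * δ + δ)) := by
  induction k with
  | zero => simp
  | succ k ih =>
    have hk : a ≤ a + k * δ := le_add_of_nonneg_right (by positivity)
    rw [Finset.sum_range_succ, ← ih, ← measure_union (Ioc_disjoint_Ioc_of_le le_rfl)
      measurableSet_Ioc, Ioc_union_Ioc_eq_Ioc hk (by linarith)]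
    push_cast
    ring_nf

/-- `(a, a + α]` is a fundamental domain for the translations by `αℤ`. -/
lemma lintegral_Ioc_tsum_sub_mul {α : ℝ} (hα : 0 < α) (a : ℝ) {v : ℝ → ℝ≥0∞}
    (hv : Measurable v) :
    ∫⁻ t in Ioc a (a + α), ∑' n : ℤ, v (t - n * α) = ∫⁻ t, v t := by
  let e : ℤ ≃ AddSubgroup.zmultiples α := Equiv.ofBijective
    (fun n => ⟨n • α, AddSubgroup.zsmul_mem_zmultiples α n⟩)
    ⟨fun m n h => (zsmul_left_strictMono hα).injective (congrArg Subtype.val h),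
      fun ⟨_, n, hn⟩ => ⟨n, Subtype.ext hn⟩⟩
  rw [lintegral_tsum (f := fun (n : ℤ) t => v (t - n * α))
      fun n => (hv.comp (measurable_sub_const _)).aemeasurable,
    (isAddFundamentalDomain_Ioc hα a volume).lintegral_eq_tsum' v, ← e.tsum_eq]
  simp [e, zsmul_eq_mul, sub_eq_neg_add, AddSubgroup.vadd_def]

lemma fourierCoeffOn_indicator {β a : ℝ} (hab : a < a + β⁻¹) {s : Set ℝ}
    (hs : MeasurableSet s) (hsub : s ⊆ Ioc a (a + β⁻¹)) (h : ℝ → ℂ) (m : ℤ) :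
    fourierCoeffOn hab (s.indicator h) m
      = β * ∫ t in s, Complex.exp (-(2 * π * Complex.I * ((m * β : ℝ) : ℂ) * t)) * h t := by
  have hind : ∀ x : ℝ, fourier (-m) (x : AddCircle (a + β⁻¹ - a)) • s.indicator h x
      = s.indicator
          (fun t => Complex.exp (-(2 * π * Complex.I * ((m * β : ℝ) : ℂ) * t)) * h t) x := by
    intro x
    by_cases hx : x ∈ s
    · simp only [indicator_of_mem hx, fourier_coe_apply, smul_eq_mul, add_sub_cancel_left]
      congr 2
      push_cast
      field_simp
    · simp [indicator_of_notMem hx]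
  rw [fourierCoeffOn_eq_integral, intervalIntegral.integral_of_le hab.le]
  simp_rw [hind]
  rw [setIntegral_indicator hs, inter_eq_right.2 hsub, add_sub_cancel_left, one_div, inv_inv,
    Complex.real_smul]

/-- Parseval's identity for a function supported in one period `(a, a + β⁻¹]`. -/
lemma tsum_enorm_sq_setIntegral_exp {β : ℝ} (hβ : 0 < β) {a : ℝ} {s : Set ℝ}
    (hs : MeasurableSet s) (hsub : s ⊆ Ioc a (a + β⁻¹)) {h : ℝ → ℂ}
    (hh : MemLp h 2 (volume.restrict s)) :
    ∑' m : ℤ, ‖∫ t in s, Complex.exp (-(2 * π * Complex.I * ((m * β : ℝ) : ℂ) * t)) * h t‖ₑ ^ 2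
      = ENNReal.ofReal β⁻¹ * ∫⁻ t in s, ‖h t‖ₑ ^ 2 := by
  have hab : a < a + β⁻¹ := lt_add_of_pos_right a (inv_pos.2 hβ)
  have hF : MemLp (s.indicator h) 2 (volume.restrict (Ioc a (a + β⁻¹))) := by
    rwa [memLp_indicator_iff_restrict hs, Measure.restrict_restrict hs,
      inter_eq_self_of_subset_left hsub]
  have hnorm : ∫ x in a..a + β⁻¹, ‖s.indicator h x‖ ^ 2 = ∫ t in s, ‖h t‖ ^ 2 := by
    have hpt : ∀ x, ‖s.indicator h x‖ ^ 2 = s.indicator (fun t => ‖h t‖ ^ 2) x := fun x => by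
      by_cases hx : x ∈ s <;> simp [hx]
    simp_rw [intervalIntegral.integral_of_le hab.le, hpt]
    rw [setIntegral_indicator hs, inter_eq_right.2 hsub]
  have hparseval : HasSum (fun m : ℤ => β ^ 2 *
      ‖∫ t in s, Complex.exp (-(2 * π * Complex.I * ((m * β : ℝ) : ℂ) * t)) * h t‖ ^ 2)
      (β * ∫ t in s, ‖h t‖ ^ 2) := by
    simpa [fourierCoeffOn_indicator hab hs hsub, hnorm, mul_pow, abs_of_pos hβ] using
      hasSum_sq_fourierCoeffOn hab hF
  have hrow := hparseval.mul_left (β ^ 2)⁻¹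
  simp_rw [← mul_assoc, inv_mul_cancel₀ (pow_ne_zero 2 hβ.ne'), one_mul] at hrow
  rw [← ofReal_integral_norm_sq_eq_lintegral hh, ← ENNReal.ofReal_mul (inv_nonneg.2 hβ.le)]
  simp_rw [← ofReal_norm_sq_eq_enorm_sq]
  rw [← ENNReal.ofReal_tsum_of_nonneg (fun _ => by positivity) hrow.summable, hrow.tsum_eq]
  congr 1
  field_simp

lemma inn_congr_ae_left {f f' : ℝ → ℂ} (h : f =ᵐ[volume] f') (g : ℝ → ℂ) :
    inn f g = inn f' g :=
  integral_congr_ae (h.mono fun t ht => by simp only [ht])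

lemma inn_indicator_one_timeFreq {s : Set ℝ} (hs : MeasurableSet s) (χ : ℝ × ℝ) (g : ℝ → ℂ) :
    inn (s.indicator fun _ => 1) (timeFreq χ g)
      = ∫ t in s, Complex.exp (-(2 * π * Complex.I * χ.2 * t)) * conj (g (t - χ.1)) := by
  rw [inn, ← integral_indicator hs]
  congr 1 with t
  by_cases ht : t ∈ s
  · simp only [indicator_of_mem ht, one_mul, timeFreq, Emod, Ttrans, map_mul,
      ← Complex.exp_conj]
    simp [map_ofNat]
  · simp [indicator_of_notMem ht]

noncomputable def periodizedSqNorm (α : ℝ) (g : ℝ → ℂ) (t : ℝ) : ℝ≥0∞ :=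
  ∑' n : ℤ, ‖g (t - n * α)‖ₑ ^ 2

lemma tsum_enorm_sq_inn_indicator_timeFreq {α β : ℝ} (hβ : 0 < β) {a : ℝ} {s : Set ℝ}
    (hs : MeasurableSet s) (hsub : s ⊆ Ioc a (a + β⁻¹)) {g : ℝ → ℂ} (hg : MemLp g 2) :
    ∑' p : ℤ × ℤ, ‖inn (s.indicator fun _ => 1) (timeFreq (p.2 * α, p.1 * β) g)‖ₑ ^ 2
      = ENNReal.ofReal β⁻¹ * ∫⁻ t in s, periodizedSqNorm α g t := by
  have hshift (n : ℤ) : MemLp (fun t => g (t - n * α)) 2 :=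
    hg.comp_measurePreserving (measurePreserving_sub_right volume _)
  have hrow (n : ℤ) :
      ∑' m : ℤ, ‖inn (s.indicator fun _ => 1) (timeFreq (n * α, m * β) g)‖ₑ ^ 2
        = ENNReal.ofReal β⁻¹ * ∫⁻ t in s, ‖g (t - n * α)‖ₑ ^ 2 := by
    have hconj : MemLp (fun t => conj (g (t - n * α))) 2 (volume.restrict s) :=
      (hshift n).star.restrict s
    simp_rw [inn_indicator_one_timeFreq hs, tsum_enorm_sq_setIntegral_exp hβ hs hsub hconj]
    simp
  rw [ENNReal.tsum_prod', ENNReal.tsum_comm]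
  simp_rw [hrow, periodizedSqNorm]
  rw [ENNReal.tsum_mul_left, lintegral_tsum fun n => ?_]
  exact (hshift n).aemeasurable.restrict.enorm.pow_const 2

/-- `p = (m, n)` indexes `E_{mβ} T_{nα} g = timeFreq (nα, mβ) g`. -/
def HasGaborFrameBounds (α β A B : ℝ) (g : Lp ℂ 2 (volume : Measure ℝ)) : Prop :=
  ∀ f : Lp ℂ 2 (volume : Measure ℝ),
    A * ‖f‖ ^ 2 ≤
        (∑' p : ℤ × ℤ,
          ‖inn (f : ℝ → ℂ) (timeFreq ((p.2 : ℝ) * α, (p.1 : ℝ) * β) (g : ℝ → ℂ))‖ ^ 2) ∧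
      (∑' p : ℤ × ℤ,
          ‖inn (f : ℝ → ℂ) (timeFreq ((p.2 : ℝ) * α, (p.1 : ℝ) * β) (g : ℝ → ℂ))‖ ^ 2) ≤
        B * ‖f‖ ^ 2

theorem HasGaborFrameBounds.toReal_setLIntegral_periodizedSqNorm_mem_Icc {α β A B : ℝ}
    {g : Lp ℂ 2 (volume : Measure ℝ)} (hframe : HasGaborFrameBounds α β A B g) (hβ : 0 < β)
    (c : ℝ) {δ : ℝ} (hδ : 0 ≤ δ) (hδβ : δ ≤ β⁻¹) :
    (∫⁻ t in Ioc c (c + δ), periodizedSqNorm α g t).toReal ∈ Icc (A * β * δ) (B * β * δ) := by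
  have hvol : volume (Ioc c (c + δ)) = ENNReal.ofReal δ := by
    rw [Real.volume_Ioc, add_sub_cancel_left]
  set f := indicatorConstLp 2 measurableSet_Ioc (hvol ▸ ENNReal.ofReal_ne_top) (1 : ℂ)
  have hf : ‖f‖ ^ 2 = δ := by
    rw [norm_indicatorConstLp two_ne_zero ENNReal.ofNat_ne_top, measureReal_def, hvol,
      ENNReal.toReal_ofReal hδ, norm_one, one_mul, ← Real.rpow_natCast, ← Real.rpow_mul hδ]
    norm_num
  have hsum : ∑' p : ℤ × ℤ, ‖inn f (timeFreq (p.2 * α, p.1 * β) g)‖ ^ 2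
      = β⁻¹ * (∫⁻ t in Ioc c (c + δ), periodizedSqNorm α g t).toReal := by
    have hinn : ∀ h, inn f h = inn ((Ioc c (c + δ)).indicator fun _ => 1) h :=
      inn_congr_ae_left indicatorConstLp_coeFn
    simp_rw [hinn]
    rw [tsum_norm_sq_eq_toReal_tsum_enorm_sq, tsum_enorm_sq_inn_indicator_timeFreq hβ
      measurableSet_Ioc (Ioc_subset_Ioc_right (by linarith)) (Lp.memLp g),
      ENNReal.toReal_mul, ENNReal.toReal_ofReal (inv_nonneg.2 hβ.le)]
  obtain ⟨hlow, hup⟩ := hframe f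
  rw [hf, hsum] at hlow hup
  constructor
  · calc A * β * δ = β * (A * δ) := by ring
      _ ≤ β * (β⁻¹ * _) := mul_le_mul_of_nonneg_left hlow hβ.le
      _ = _ := by field_simp
  · calc _ = β * (β⁻¹ * (∫⁻ t in Ioc c (c + δ), periodizedSqNorm α g t).toReal) := by
          field_simp
      _ ≤ β * (B * δ) := mul_le_mul_of_nonneg_left hup hβ.le
      _ = B * β * δ := by ring

theorem stmt14_general (α β A B : ℝ) (hα : 0 < α) (hβ : 0 < β)
    (g : Lp ℂ 2 (volume : Measure ℝ))
    (hframe : ∀ f : Lp ℂ 2 (volume : Measure ℝ),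
      A * ‖f‖ ^ 2 ≤
        (∑' p : ℤ × ℤ,
          ‖inn (f : ℝ → ℂ) (timeFreq ((p.2 : ℝ) * α, (p.1 : ℝ) * β) (g : ℝ → ℂ))‖ ^ 2) ∧
      (∑' p : ℤ × ℤ,
          ‖inn (f : ℝ → ℂ) (timeFreq ((p.2 : ℝ) * α, (p.1 : ℝ) * β) (g : ℝ → ℂ))‖ ^ 2) ≤
        B * ‖f‖ ^ 2) :
    A * (α * β) ≤ ‖g‖ ^ 2 ∧ ‖g‖ ^ 2 ≤ B * (α * β) := by
  have hframe : HasGaborFrameBounds α β A B g := hframe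
  obtain ⟨N, hN⟩ := exists_nat_gt (α * β)
  have hN0 : (0 : ℝ) < N := (mul_pos hα hβ).trans hN
  set δ := α / N
  have hδ : 0 ≤ δ := by positivity
  have hδβ : δ ≤ β⁻¹ := by
    rw [div_le_iff₀ hN0, ← div_eq_inv_mul, le_div_iff₀ hβ]
    exact hN.le
  have hNδ : N * δ = α := mul_div_cancel₀ α hN0.ne'
  have hcells : ENNReal.ofReal (‖g‖ ^ 2)
      = ∑ i ∈ Finset.range N, ∫⁻ t in Ioc (i * δ) (i * δ + δ), periodizedSqNorm α g t := by
    have h := measure_Ioc_eq_sum_range (volume.withDensity (periodizedSqNorm α g)) hδ 0 N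
    simp only [withDensity_apply _ measurableSet_Ioc, zero_add, hNδ] at h
    rw [Lp.ofReal_norm_sq_eq_lintegral, ← h]
    simpa only [periodizedSqNorm, zero_add] using (lintegral_Ioc_tsum_sub_mul hα 0
      ((Lp.stronglyMeasurable g).measurable.enorm.pow_const 2)).symm
  have hcell (i : ℕ) := hframe.toReal_setLIntegral_periodizedSqNorm_mem_Icc hβ (i * δ) hδ hδβ
  rw [← ENNReal.toReal_ofReal (sq_nonneg ‖g‖), hcells,
    ENNReal.toReal_sum (ENNReal.sum_ne_top.1 (hcells ▸ ENNReal.ofReal_ne_top))]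
  constructor
  · calc A * (α * β) = (Finset.range N).card • (A * β * δ) := by
          rw [Finset.card_range, nsmul_eq_mul, ← hNδ]; ring
      _ ≤ _ := Finset.card_nsmul_le_sum _ _ _ fun i _ => (hcell i).1
  · calc _ ≤ (Finset.range N).card • (B * β * δ) :=
          Finset.sum_le_card_nsmul _ _ _ fun i _ => (hcell i).2
      _ = B * (α * β) := by rw [Finset.card_range, nsmul_eq_mul, ← hNδ]; ring

/-- Frame norm bounds for the generator: if `{E_{mβ}T_{nα} g}_{m,n∈ℤ}` is a frame for `L²(ℝ)`
with frame bounds `A, B`, then `A·αβ ≤ ‖g‖₂² ≤ B·αβ`. Note `E_{mβ}T_{nα} = π(nα, mβ)`. -/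
theorem stmt14 (α β A B : ℝ) (hα : 0 < α) (hβ : 0 < β) (hA : 0 < A) (hB : 0 < B)
    (g : Lp ℂ 2 (volume : Measure ℝ))
    (hframe : ∀ f : Lp ℂ 2 (volume : Measure ℝ),
      A * ‖f‖ ^ 2 ≤
        (∑' p : ℤ × ℤ,
          ‖inn (f : ℝ → ℂ) (timeFreq ((p.2 : ℝ) * α, (p.1 : ℝ) * β) (g : ℝ → ℂ))‖ ^ 2) ∧
      (∑' p : ℤ × ℤ,
          ‖inn (f : ℝ → ℂ) (timeFreq ((p.2 : ℝ) * α, (p.1 : ℝ) * β) (g : ℝ → ℂ))‖ ^ 2) ≤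
        B * ‖f‖ ^ 2) :
    A * (α * β) ≤ ‖g‖ ^ 2 ∧ ‖g‖ ^ 2 ≤ B * (α * β) :=
  stmt14_general α β A B hα hβ g hframe
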